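/- (Proposition 2.B, bound.) Let A, A^D be real n×n matrices, B a real n×m matrix, K a real m×n matrix, F = A + B K, and let M be any real m'×n matrix. Let δû : ℕ → ℝᵐ with ‖δû(j)‖ ≤ ρ for all j, define δx̂(0) = 0, δx̂(j+1) = A^D δx̂(j) + B δû(j); δx(0) = 0, δx(j+1) = A δx(j) + B(δû(j) + K(δx(j) − δx̂(j))); and ε(j) = δx(j) − δx̂(j). Then for every j ≥ 0, ‖M ε(j)‖ ≤ Σ_{r=2}^{j} ‖M F^{j−r}(A − A^D)‖ · g(r−1), where g(r) := ρ · Σ_{s=1}^{r} ‖(A^D)^{r−s} B‖. -/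

import Mathlib

/-!
The tracking error obeys `ε(j+1) = F ε(j) + (A - A^D) δx̂(j)` with `ε(0) = 0`, so by variation of
constants `M ε(j) = ∑_{r=1}^{j} M F^{j-r} (A - A^D) δx̂(r-1)`. The same formula for the nominal
recursion `δx̂(j+1) = A^D δx̂(j) + B δû(j)` gives `‖δx̂(r)‖ ≤ g(r)`; the term `r = 1` vanishes
because `g(0) = 0`.
-/

open Matrix Finset Filter Topology

/-- Operator norm of a real matrix, induced by the Euclidean norms on domain and codomain. -/
noncomputable def opN {α β : Type*} [Fintype α] [Fintype β] [DecidableEq β]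
    (A : Matrix α β ℝ) : ℝ :=
  ‖LinearMap.toContinuousLinearMap (Matrix.toEuclideanLin A)‖

/-- A real matrix acting on Euclidean vectors. -/
noncomputable def appE {α β : Type*} [Fintype α] [Fintype β] [DecidableEq β]
    (A : Matrix α β ℝ) (v : EuclideanSpace ℝ β) : EuclideanSpace ℝ α :=
  Matrix.toEuclideanLin A v

section appE

variable {α β γ : Type*} [Fintype α] [Fintype β] [Fintype γ] [DecidableEq β] [DecidableEq γ]

lemma appE_mul (A : Matrix α β ℝ) (B : Matrix β γ ℝ) (v : EuclideanSpace ℝ γ) :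
    appE (A * B) v = appE A (appE B v) := by
  simp [appE, Matrix.toLpLin_apply, Matrix.mulVec_mulVec]

lemma appE_add (A B : Matrix α β ℝ) (v : EuclideanSpace ℝ β) :
    appE (A + B) v = appE A v + appE B v := by
  simp [appE]

lemma appE_sub (A B : Matrix α β ℝ) (v : EuclideanSpace ℝ β) :
    appE (A - B) v = appE A v - appE B v := by
  simp [appE]

lemma appE_one [DecidableEq α] (v : EuclideanSpace ℝ α) : appE (1 : Matrix α α ℝ) v = v := by
  simp [appE]

lemma appE_add_right (A : Matrix α β ℝ) (u v : EuclideanSpace ℝ β) :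
    appE A (u + v) = appE A u + appE A v :=
  map_add (Matrix.toEuclideanLin A) u v

lemma appE_sub_right (A : Matrix α β ℝ) (u v : EuclideanSpace ℝ β) :
    appE A (u - v) = appE A u - appE A v :=
  map_sub (Matrix.toEuclideanLin A) u v

lemma appE_sum_right {ι : Type*} (A : Matrix α β ℝ) (s : Finset ι)
    (v : ι → EuclideanSpace ℝ β) : appE A (∑ i ∈ s, v i) = ∑ i ∈ s, appE A (v i) :=
  map_sum (Matrix.toEuclideanLin A) v s

lemma norm_appE_le (A : Matrix α β ℝ) (v : EuclideanSpace ℝ β) : ‖appE A v‖ ≤ opN A * ‖v‖ :=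
  (LinearMap.toContinuousLinearMap (Matrix.toEuclideanLin A)).le_opNorm v

lemma opN_nonneg (A : Matrix α β ℝ) : 0 ≤ opN A := norm_nonneg _

end appE

section LinearRecurrence

variable {ι κ π : Type*} [Fintype ι] [Fintype κ] [Fintype π] [DecidableEq ι] [DecidableEq κ]
  (T : Matrix ι ι ℝ) (E : Matrix ι κ ℝ) (w : ℕ → EuclideanSpace ℝ κ)
  {x : ℕ → EuclideanSpace ℝ ι} (hx0 : x 0 = 0) (hx : ∀ j, x (j + 1) = appE T (x j) + appE E (w j))
include hx0 hx

lemma linear_recurrence_eq_sum (j : ℕ) :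
    x j = ∑ s ∈ Icc 1 j, appE (T ^ (j - s) * E) (w (s - 1)) := by
  induction j with
  | zero => simp [hx0]
  | succ j ih =>
    rw [hx, ih, sum_Icc_succ_top (by omega), Nat.sub_self, pow_zero, Matrix.one_mul,
      Nat.add_sub_cancel, appE_sum_right]
    congr 1
    refine sum_congr rfl fun s hs => ?_
    rw [← appE_mul, ← Matrix.mul_assoc, ← pow_succ', Nat.sub_add_comm (mem_Icc.mp hs).2]

lemma norm_appE_linear_recurrence_le (P : Matrix π ι ℝ) (j : ℕ) :
    ‖appE P (x j)‖ ≤ ∑ s ∈ Icc 1 j, opN (P * T ^ (j - s) * E) * ‖w (s - 1)‖ := by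
  rw [linear_recurrence_eq_sum T E w hx0 hx, appE_sum_right]
  refine (norm_sum_le _ _).trans (sum_le_sum fun s _ => ?_)
  rw [← appE_mul, ← Matrix.mul_assoc]
  exact norm_appE_le _ _

lemma norm_linear_recurrence_le {ρ : ℝ} (hw : ∀ j, ‖w j‖ ≤ ρ) (j : ℕ) :
    ‖x j‖ ≤ ρ * ∑ s ∈ Icc 1 j, opN (T ^ (j - s) * E) := by
  have h := norm_appE_linear_recurrence_le T E w hx0 hx (1 : Matrix ι ι ℝ) j
  simp only [appE_one, Matrix.one_mul] at h
  rw [mul_sum]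
  refine h.trans (sum_le_sum fun s _ => ?_)
  rw [mul_comm ρ]
  exact mul_le_mul_of_nonneg_left (hw _) (opN_nonneg _)

end LinearRecurrence

lemma feedback_error_succ {ι κ : Type*} [Fintype ι] [Fintype κ] [DecidableEq ι] [DecidableEq κ]
    (A AD : Matrix ι ι ℝ) (B : Matrix ι κ ℝ) (K : Matrix κ ι ℝ)
    (u : EuclideanSpace ℝ κ) (x xh x' xh' : EuclideanSpace ℝ ι)
    (hxh' : xh' = appE AD xh + appE B u) (hx' : x' = appE A x + appE B (u + appE K (x - xh))) :
    x' - xh' = appE (A + B * K) (x - xh) + appE (A - AD) xh := by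
  subst hxh' hx'
  simp only [appE_add, appE_sub, appE_mul, appE_add_right, appE_sub_right]
  abel

lemma sum_Icc_one_eq_sum_Icc_two {M : Type*} [AddCommMonoid M] (f : ℕ → M) (hf : f 1 = 0)
    (j : ℕ) : ∑ r ∈ Icc 1 j, f r = ∑ r ∈ Icc 2 j, f r := by
  refine (sum_subset (Icc_subset_Icc_left (by norm_num)) fun r hr hr' => ?_).symm
  rw [mem_Icc] at hr hr'
  obtain rfl : r = 1 := by omega
  exact hf

/-- Proposition 2.B (bound): for any matrix `M`,
`‖M ε(j)‖ ≤ ∑_{r=2}^{j} ‖M F^{j-r}(A - A^D)‖ g(r-1)`. -/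
theorem prop2B_bound {n m mp : ℕ} (A AD : Matrix (Fin n) (Fin n) ℝ)
    (B : Matrix (Fin n) (Fin m) ℝ) (K : Matrix (Fin m) (Fin n) ℝ)
    (F : Matrix (Fin n) (Fin n) ℝ) (hF : F = A + B * K)
    (M : Matrix (Fin mp) (Fin n) ℝ)
    (ρ : ℝ) (du : ℕ → EuclideanSpace ℝ (Fin m)) (hdu : ∀ j, ‖du j‖ ≤ ρ)
    (dxh : ℕ → EuclideanSpace ℝ (Fin n)) (hdxh0 : dxh 0 = 0)
    (hdxh : ∀ j, dxh (j + 1) = appE AD (dxh j) + appE B (du j))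
    (dx : ℕ → EuclideanSpace ℝ (Fin n)) (hdx0 : dx 0 = 0)
    (hdx : ∀ j, dx (j + 1) = appE A (dx j) + appE B (du j + appE K (dx j - dxh j)))
    (ε : ℕ → EuclideanSpace ℝ (Fin n)) (hε : ∀ j, ε j = dx j - dxh j)
    (g : ℕ → ℝ) (hg : ∀ r, g r = ρ * ∑ s ∈ Finset.Icc 1 r, opN (AD ^ (r - s) * B)) :
    ∀ j, ‖appE M (ε j)‖ ≤
      ∑ r ∈ Finset.Icc 2 j, opN (M * F ^ (j - r) * (A - AD)) * g (r - 1) := by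
  intro j
  have hdxh_le (k : ℕ) : ‖dxh k‖ ≤ g k :=
    hg k ▸ norm_linear_recurrence_le AD B du hdxh0 hdxh hdu k
  have hε0 : ε 0 = 0 := by rw [hε, hdx0, hdxh0, sub_zero]
  have hε_succ (k : ℕ) : ε (k + 1) = appE F (ε k) + appE (A - AD) (dxh k) := by
    rw [hε, hε, hF]
    exact feedback_error_succ A AD B K _ _ _ _ _ (hdxh k) (hdx k)
  calc ‖appE M (ε j)‖
      ≤ ∑ r ∈ Icc 1 j, opN (M * F ^ (j - r) * (A - AD)) * ‖dxh (r - 1)‖ :=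
        norm_appE_linear_recurrence_le F (A - AD) dxh hε0 hε_succ M j
    _ ≤ ∑ r ∈ Icc 1 j, opN (M * F ^ (j - r) * (A - AD)) * g (r - 1) :=
        sum_le_sum fun r _ => mul_le_mul_of_nonneg_left (hdxh_le _) (opN_nonneg _)
    _ = ∑ r ∈ Icc 2 j, opN (M * F ^ (j - r) * (A - AD)) * g (r - 1) :=
        sum_Icc_one_eq_sum_Icc_two _ (by simp [hg]) j
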